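/- arXiv:1709.08547 — 6 statements merged into one kernel-verified Lean document; each statement's English description precedes it below -/
import Mathlib

section
/- Let T be a contractive linear operator on a Banach space X. Define Y = ℓ¹(ℤ; X), let U : Y → Y be the right shift (x_n) ↦ (x_{n-1}), let J : X → Y be the injection into the zeroth coordinate, and let Q : Y → X be defined by Q((x_n)) = Σ_{n≥0} Tⁿ x_n. Then U is an invertible isometry, J and Q are contractive, and Tⁿ = Q Uⁿ J for all n ∈ ℕ₀. -/
/-!
Reindexing along an injection `e` is a contraction of `ℓᵖ`, and along an equivalence an isometry;
the shift `U` is reindexing along `n ↦ n - 1`. The map `Q` factors as restriction to `ℕ ⊆ ℤ`,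
the diagonal operator `(Tⁿ)ₙ` (uniformly bounded by `1` since `‖T‖ ≤ 1`) and summation `ℓ¹ → X`,
each a contraction. Finally `Uⁿ J x` is the unit vector at `n` carrying `x`, which `Q` sends to
`Tⁿ x`.
-/

open scoped ENNReal lp
open Function

theorem Memℓp.comp_injective {ι κ E : Type*} [NormedAddCommGroup E] {p : ℝ≥0∞} {f : ι → E}
    (hf : Memℓp f p) {e : κ → ι} (he : Injective e) : Memℓp (f ∘ e) p := by
  rcases p.trichotomy with rfl | rfl | hp
  · exact memℓp_zero_iff.2 (hf.finite_dsupport.preimage he.injOn)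
  · exact memℓp_infty_iff.2 (hf.bddAbove.mono (Set.range_comp_subset_range e fun i => ‖f i‖))
  · exact memℓp_gen ((hf.summable hp).comp_injective he)

namespace lp

variable {ι κ E : Type*} [NormedAddCommGroup E]

theorem norm_le_of_coeFn_eq_comp {p : ℝ≥0∞} [Fact (1 ≤ p)] {e : κ → ι} (he : Injective e)
    {f : lp (fun _ : ι => E) p} {g : lp (fun _ : κ => E) p} (h : ⇑g = ⇑f ∘ e) : ‖g‖ ≤ ‖f‖ := by
  rcases p.dichotomy with rfl | hp
  · exact norm_le_of_forall_le (norm_nonneg f) fun k => h ▸ norm_apply_le_norm (by simp) f (e k)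
  · have hp' : 0 < p.toReal := zero_lt_one.trans_le hp
    refine norm_le_of_tsum_le hp' (norm_nonneg f) ?_
    rw [norm_rpow_eq_tsum hp', h]
    exact tsum_comp_le_tsum_of_inj ((lp.memℓp f).summable hp') (fun _ => by positivity) he

section Reindex

variable (𝕜 : Type*) [NormedField 𝕜] [NormedSpace 𝕜 E] (p : ℝ≥0∞) [Fact (1 ≤ p)]

noncomputable def compCLM {e : κ → ι} (he : Injective e) :
    lp (fun _ : ι => E) p →L[𝕜] lp (fun _ : κ => E) p :=
  LinearMap.mkContinuous
    { toFun f := ⟨f ∘ e, (lp.memℓp f).comp_injective he⟩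
      map_add' _ _ := rfl
      map_smul' _ _ := rfl }
    1 fun f => by
      rw [one_mul]
      exact norm_le_of_coeFn_eq_comp he rfl

noncomputable def compEquiv (σ : ι ≃ κ) : lp (fun _ : κ => E) p ≃ₗᵢ[𝕜] lp (fun _ : ι => E) p where
  toFun f := ⟨f ∘ σ, (lp.memℓp f).comp_injective σ.injective⟩
  invFun f := ⟨f ∘ σ.symm, (lp.memℓp f).comp_injective σ.symm.injective⟩
  map_add' _ _ := rfl
  map_smul' _ _ := rfl
  left_inv f := by ext; simp
  right_inv f := by ext; simp
  norm_map' f := le_antisymm (norm_le_of_coeFn_eq_comp σ.injective rfl) <|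
    norm_le_of_coeFn_eq_comp σ.symm.injective
      (funext fun k => congrArg f (σ.apply_symm_apply k).symm)

variable {𝕜 p}

@[simp]
theorem compCLM_apply {e : κ → ι} (he : Injective e) (f : lp (fun _ : ι => E) p) (k : κ) :
    compCLM 𝕜 p he f k = f (e k) :=
  rfl

@[simp]
theorem compEquiv_apply (σ : ι ≃ κ) (f : lp (fun _ : κ => E) p) (i : ι) :
    compEquiv 𝕜 p σ f i = f (σ i) :=
  rfl

variable [DecidableEq ι] [DecidableEq κ]

theorem compCLM_single {e : κ → ι} (he : Injective e) (k : κ) (x : E) :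
    compCLM 𝕜 p he (lp.single p (e k) x) = lp.single p k x := by
  ext j
  simp [Pi.single_apply, he.eq_iff]

theorem compEquiv_single (σ : ι ≃ κ) (k : κ) (x : E) :
    compEquiv 𝕜 p σ (lp.single p k x) = lp.single p (σ.symm k) x := by
  ext i
  simp [Pi.single_apply, σ.eq_symm_apply]

end Reindex

theorem norm_compCLM_le (𝕜 : Type*) [NontriviallyNormedField 𝕜] [NormedSpace 𝕜 E]
    {p : ℝ≥0∞} [Fact (1 ≤ p)] {e : κ → ι} (he : Injective e) : ‖compCLM (E := E) 𝕜 p he‖ ≤ 1 :=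
  LinearMap.mkContinuous_norm_le _ zero_le_one _

theorem mapCLM_single {𝕜 : Type*} [NontriviallyNormedField 𝕜] {E F : ι → Type*}
    [∀ i, NormedAddCommGroup (E i)] [∀ i, NormedSpace 𝕜 (E i)]
    [∀ i, NormedAddCommGroup (F i)] [∀ i, NormedSpace 𝕜 (F i)] {p : ℝ≥0∞} [Fact (1 ≤ p)]
    [DecidableEq ι]
    (A : ∀ i, E i →L[𝕜] F i) {C : ℝ} (hC : 0 ≤ C) (hA : ∀ i, ‖A i‖ ≤ C) (i : ι) (x : E i) :
    mapCLM p A hC hA (lp.single p i x) = lp.single p i (A i x) := by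
  ext j
  by_cases hj : j = i
  · subst hj; simp
  · simp [hj]

theorem tsumCLM_single (𝕜 : Type*) [NormedRing 𝕜] [Module 𝕜 E] [IsBoundedSMul 𝕜 E]
    [CompleteSpace E] [DecidableEq ι] (i : ι) (x : E) : tsumCLM 𝕜 ι E (lp.single 1 i x) = x := by
  simp [tsum_pi_single]

end lp

theorem ContinuousLinearMap.norm_pow_le_one {𝕜 E : Type*} [NontriviallyNormedField 𝕜]
    [NormedAddCommGroup E] [NormedSpace 𝕜 E] {T : E →L[𝕜] E} (hT : ‖T‖ ≤ 1) (n : ℕ) :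
    ‖T ^ n‖ ≤ 1 := by
  cases n with
  | zero => exact norm_id_le
  | succ n => exact (norm_pow_le' T n.succ_pos).trans (pow_le_one₀ (norm_nonneg _) hT)

/-- For a contraction `T` on a Banach space `X`, on `Y = ℓ¹(ℤ; X)` the
right shift `U`, the injection `J` into the zeroth coordinate, and
`Q((xₙ)) = ∑_{n ≥ 0} Tⁿ xₙ` give an invertible isometry `U`, contractions `J` and `Q`,
and `Tⁿ = Q Uⁿ J` for all `n ∈ ℕ₀`. -/
theorem shift_dilation_on_l1 (𝕜 : Type*) [RCLike 𝕜] (X : Type*) [NormedAddCommGroup X]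
    [NormedSpace 𝕜 X] [CompleteSpace X] (T : X →L[𝕜] X) (hT : ‖T‖ ≤ 1) :
    ∃ (U : lp (fun _ : ℤ => X) 1 ≃ₗᵢ[𝕜] lp (fun _ : ℤ => X) 1)
      (J : X →L[𝕜] lp (fun _ : ℤ => X) 1) (Q : lp (fun _ : ℤ => X) 1 →L[𝕜] X),
      (∀ (f : lp (fun _ : ℤ => X) 1) (n : ℤ), (U f : ∀ _ : ℤ, X) n = (f : ∀ _ : ℤ, X) (n - 1)) ∧
      (∀ (x : X) (n : ℤ), (J x : ∀ _ : ℤ, X) n = if n = 0 then x else 0) ∧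
      (∀ f : lp (fun _ : ℤ => X) 1, Q f = ∑' n : ℕ, (T ^ n) ((f : ∀ _ : ℤ, X) (n : ℤ))) ∧
      ‖J‖ ≤ 1 ∧ ‖Q‖ ≤ 1 ∧
      (∀ (n : ℕ) (x : X), (T ^ n) x = Q ((⇑U)^[n] (J x))) := by
  let U := lp.compEquiv (E := X) 𝕜 1 (Equiv.subRight (1 : ℤ))
  let J := lp.singleContinuousLinearMap 𝕜 (fun _ : ℤ => X) 1 0
  let Q := lp.tsumCLM 𝕜 ℕ X ∘L lp.mapCLM 1 (fun n => T ^ n) zero_le_one (T.norm_pow_le_one hT) ∘L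
    lp.compCLM 𝕜 1 (Nat.cast_injective (R := ℤ))
  have hUJ (n : ℕ) (x : X) : U^[n] (J x) = lp.single 1 (n : ℤ) x := by
    induction n with
    | zero => rfl
    | succ n ih => rw [iterate_succ_apply', ih, lp.compEquiv_single]; simp
  refine ⟨U, J, Q, fun _ _ => rfl, fun x n => ?_, fun _ => rfl, ?_, ?_, fun n x => ?_⟩
  · simp [J, Pi.single_apply]
  · exact ContinuousLinearMap.opNorm_le_bound _ zero_le_one fun x => by simp [J]
  · refine (ContinuousLinearMap.opNorm_comp_le _ _).trans <| mul_le_one₀ lp.norm_tsumCLM_le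
      (norm_nonneg _) <| (ContinuousLinearMap.opNorm_comp_le _ _).trans <|
      mul_le_one₀ (lp.norm_mapCLM_le _ _ _ _) (norm_nonneg _) (lp.norm_compCLM_le 𝕜 _)
  · rw [hUJ, ContinuousLinearMap.comp_apply, ContinuousLinearMap.comp_apply, lp.compCLM_single,
      lp.mapCLM_single, lp.tsumCLM_single]
end

section
/- If X and Z are Banach spaces such that X is finitely representable in Z, then for every n ∈ ℕ the space ℓ²_n(X) is finitely representable in ℓ²(Z). -/
open scoped ENNReal NNReal

/-- `X` is finitely representable in `Z`: every finite-dimensional subspace `E ⊆ X` is,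
up to `1 + ε`, isomorphic to a subspace `F ⊆ Z`. -/
def FinitelyRepresentable (𝕜 : Type*) [NontriviallyNormedField 𝕜] (X Z : Type*)
    [NormedAddCommGroup X] [NormedSpace 𝕜 X] [NormedAddCommGroup Z] [NormedSpace 𝕜 Z] : Prop :=
  ∀ (E : Subspace 𝕜 X), FiniteDimensional 𝕜 E → ∀ ε : ℝ, 0 < ε →
    ∃ (F : Subspace 𝕜 Z) (u : E ≃L[𝕜] F),
      ‖(u : E →L[𝕜] F)‖ * ‖(u.symm : F →L[𝕜] E)‖ ≤ 1 + ε

set_option maxHeartbeats 1000000 in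
/-- If `X` is finitely representable in `Z`, then for every `n ∈ ℕ` the
space `ℓ²ₙ(X)` is finitely representable in `ℓ²(Z)`. -/
theorem piLp_finitelyRepresentable_lp (𝕜 : Type*) [RCLike 𝕜]
    (X Z : Type*) [NormedAddCommGroup X] [NormedSpace 𝕜 X]
    [NormedAddCommGroup Z] [NormedSpace 𝕜 Z]
    (h : FinitelyRepresentable 𝕜 X Z) (n : ℕ) :
    FinitelyRepresentable 𝕜 (PiLp 2 (fun _ : Fin n => X)) (lp (fun _ : ℕ => Z) 2) := by
  classical
  intro E hE ε hε
  haveI := hE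
  -- the subspace of X spanned by all coordinates of E
  set E' : Subspace 𝕜 X :=
    ⨆ k : Fin n, E.map (PiLp.projₗ 2 (fun _ : Fin n => X) k) with hE'def
  have hmem : ∀ (x : E) (k : Fin n), (x : PiLp 2 (fun _ : Fin n => X)) k ∈ E' := by
    intro x k
    exact le_iSup (fun k => E.map (PiLp.projₗ 2 (fun _ : Fin n => X) k)) k
      ⟨(x : PiLp 2 (fun _ : Fin n => X)), x.2, rfl⟩
  haveI hE'fd : FiniteDimensional 𝕜 E' := by
    rw [hE'def]; infer_instance
  obtain ⟨F, u, hu⟩ := h E' hE'fd ε hε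
  -- the coordinate maps E → E'
  set ψ : Fin n → (E →ₗ[𝕜] E') := fun k =>
    LinearMap.codRestrict E'
      ((PiLp.projₗ 2 (fun _ : Fin n => X) k).comp E.subtype) (fun x => hmem x k) with hψdef
  have hψval : ∀ (k : Fin n) (x : E), ((ψ k x : X)) = (x : PiLp 2 (fun _ : Fin n => X)) k :=
    fun _ _ => rfl
  -- the function underlying T x
  set g : E → ∀ _ : ℕ, Z := fun x i =>
    if hi : i < n then (u (ψ ⟨i, hi⟩ x) : Z) else 0 with hgdef
  have hgmem : ∀ x : E, Memℓp (g x) 2 := by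
    intro x
    refine (memℓp_zero ?_).of_exponent_ge (by norm_num : (0 : ℝ≥0∞) ≤ 2)
    refine (Set.finite_Iio n).subset ?_
    intro i hi
    simp only [Set.mem_setOf_eq, hgdef] at hi
    by_contra hin
    simp only [Set.mem_Iio, not_lt] at hin
    exact hi (dif_neg (not_lt.mpr hin))
  -- the linear map T : E → ℓ²(Z)
  set T : E →ₗ[𝕜] lp (fun _ : ℕ => Z) 2 :=
    { toFun := fun x => ⟨g x, hgmem x⟩
      map_add' := by
        intro x y
        apply Subtype.ext
        funext i
        show g (x + y) i = g x i + g y i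
        simp only [hgdef]
        split_ifs with hi
        · rw [map_add (ψ ⟨i, hi⟩), map_add u]
          rfl
        · simp
      map_smul' := by
        intro c x
        apply Subtype.ext
        funext i
        show g (c • x) i = c • g x i
        simp only [hgdef]
        split_ifs with hi
        · rw [map_smul (ψ ⟨i, hi⟩), map_smul u]
          rfl
        · simp } with hTdef
  have hTapp : ∀ (x : E) (i : ℕ), (T x : ∀ _ : ℕ, Z) i = g x i := fun _ _ => rfl
  -- norm formula for T x
  have h2 : (0 : ℝ) < (2 : ℝ≥0∞).toReal := by norm_num
  have hnorm : ∀ x : E, ‖T x‖ ^ 2 = ∑ k : Fin n, ‖(u (ψ k x) : Z)‖ ^ 2 := by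
    intro x
    have := lp.norm_rpow_eq_tsum h2 (T x)
    rw [tsum_eq_sum (s := Finset.range n)
      (by
        intro i hi
        rw [hTapp]
        simp only [hgdef]
        rw [dif_neg (by simpa using hi)]
        simp [Real.zero_rpow (ne_of_gt h2)])] at this
    simp only [ENNReal.toReal_ofNat, Real.rpow_two] at this
    rw [this, Finset.sum_range fun i => ‖(T x : ∀ _ : ℕ, Z) i‖ ^ 2]
    refine Finset.sum_congr rfl ?_
    intro k _
    rw [hTapp]
    simp only [hgdef]
    rw [dif_pos k.2]
  -- norm formula for x
  have hxnorm : ∀ x : E, ‖x‖ ^ 2 = ∑ k : Fin n, ‖ψ k x‖ ^ 2 := by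
    intro x
    have := PiLp.norm_sq_eq_of_L2 (fun _ : Fin n => X) (x : PiLp 2 (fun _ : Fin n => X))
    rw [show ‖x‖ = ‖(x : PiLp 2 (fun _ : Fin n => X))‖ from rfl, this]
    exact Finset.sum_congr rfl fun k _ => by rw [show ‖ψ k x‖ = ‖(ψ k x : X)‖ from rfl, hψval]
  -- upper bound
  have hub : ∀ x : E, ‖T x‖ ≤ ‖(u : E' →L[𝕜] F)‖ * ‖x‖ := by
    intro x
    rw [← pow_le_pow_iff_left₀ (norm_nonneg _) (by positivity) (two_ne_zero), mul_pow,
      hnorm x, hxnorm x, Finset.mul_sum]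
    refine Finset.sum_le_sum fun k _ => ?_
    rw [show ‖(u (ψ k x) : Z)‖ = ‖u (ψ k x)‖ from rfl, ← mul_pow]
    exact pow_le_pow_left₀ (norm_nonneg _) ((u : E' →L[𝕜] F).le_opNorm _) 2
  -- lower bound
  have hlb : ∀ x : E, ‖x‖ ≤ ‖(u.symm : F →L[𝕜] E')‖ * ‖T x‖ := by
    intro x
    rw [← pow_le_pow_iff_left₀ (norm_nonneg _) (by positivity) (two_ne_zero), mul_pow,
      hnorm x, hxnorm x, Finset.mul_sum]
    refine Finset.sum_le_sum fun k _ => ?_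
    have : ψ k x = u.symm (u (ψ k x)) := by simp
    calc ‖ψ k x‖ ^ 2 = ‖u.symm (u (ψ k x))‖ ^ 2 := by rw [← this]
      _ ≤ (‖(u.symm : F →L[𝕜] E')‖ * ‖(u (ψ k x) : Z)‖) ^ 2 := by
          refine pow_le_pow_left₀ (norm_nonneg _) ?_ 2
          exact (u.symm : F →L[𝕜] E').le_opNorm _
      _ = ‖(u.symm : F →L[𝕜] E')‖ ^ 2 * ‖(u (ψ k x) : Z)‖ ^ 2 := by rw [mul_pow]
  -- T is injective
  have hinj : Function.Injective T := by
    intro x y hxy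
    have : T (x - y) = 0 := by rw [map_sub, hxy, sub_self]
    have h0 : ‖x - y‖ ≤ 0 := by simpa [this] using hlb (x - y)
    rw [← sub_eq_zero]
    exact norm_le_zero_iff.mp h0
  set F' : Subspace 𝕜 (lp (fun _ : ℕ => Z) 2) := LinearMap.range T with hF'def
  set e₀ : E ≃ₗ[𝕜] F' := LinearEquiv.ofInjective T hinj with he₀def
  have he₀val : ∀ x : E, ((e₀ x : F') : lp (fun _ : ℕ => Z) 2) = T x := fun x =>
    LinearEquiv.ofInjective_apply T x
  have he₀norm : ∀ x : E, ‖e₀ x‖ = ‖T x‖ := by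
    intro x
    rw [show ‖e₀ x‖ = ‖((e₀ x : F') : lp (fun _ : ℕ => Z) 2)‖ from rfl, he₀val]
  clear he₀def
  clear_value e₀
  clear hF'def
  clear_value F'
  have hsymmbound : ∀ y : F', ‖e₀.symm y‖ ≤ ‖(u.symm : F →L[𝕜] E')‖ * ‖y‖ := by
    intro y
    have : T (e₀.symm y) = (y : lp (fun _ : ℕ => Z) 2) := by
      rw [← he₀val (e₀.symm y), LinearEquiv.apply_symm_apply]
    calc ‖e₀.symm y‖ ≤ ‖(u.symm : F →L[𝕜] E')‖ * ‖T (e₀.symm y)‖ := hlb _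
      _ = ‖(u.symm : F →L[𝕜] E')‖ * ‖y‖ := by rw [this]; rfl
  set u' : E ≃L[𝕜] F' :=
    { e₀ with
      continuous_toFun := by
        refine AddMonoidHomClass.continuous_of_bound e₀.toLinearMap ‖(u : E' →L[𝕜] F)‖ ?_
        intro x
        rw [show ‖e₀.toLinearMap x‖ = ‖e₀ x‖ from rfl, he₀norm]
        exact hub x
      continuous_invFun := by
        exact AddMonoidHomClass.continuous_of_bound e₀.symm.toLinearMap
          ‖(u.symm : F →L[𝕜] E')‖ hsymmbound } with hu'def
  refine ⟨F', u', ?_⟩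
  have h1 : ‖(u' : E →L[𝕜] F')‖ ≤ ‖(u : E' →L[𝕜] F)‖ := by
    refine ContinuousLinearMap.opNorm_le_bound _ (norm_nonneg ((u : E' →L[𝕜] F)))  ?_
    intro x
    rw [show ‖(u' : E →L[𝕜] F') x‖ = ‖e₀ x‖ from rfl, he₀norm]
    exact hub x
  have h2' : ‖(u'.symm : F' →L[𝕜] E)‖ ≤ ‖(u.symm : F →L[𝕜] E')‖ := by
    refine ContinuousLinearMap.opNorm_le_bound _ (norm_nonneg ((u.symm : F →L[𝕜] E')))  ?_
    intro y
    exact hsymmbound y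
  calc ‖(u' : E →L[𝕜] F')‖ * ‖(u'.symm : F' →L[𝕜] E)‖
      ≤ ‖(u : E' →L[𝕜] F)‖ * ‖(u.symm : F →L[𝕜] E')‖ :=
        mul_le_mul h1 h2' (norm_nonneg (u'.symm : F' →L[𝕜] E)) (norm_nonneg ((u : E' →L[𝕜] F)))
    _ ≤ 1 + ε := hu
end

section
/- Fix p ∈ (1,∞) with conjugate exponent q. Let X be a Banach space, m, N ∈ ℕ, and λ₁,…,λ_m ∈ [0,1] with Σλ_k = 1. Let A be the set of functions α : {1,…,N} → {1,…,m} and for α ∈ A set |λ|_α := Π_{k=1}^N λ_{α(k)}. Then Σ_{α∈A} |λ|_α = 1, the map J : X → (X^N)^A defined by (Jx)_{k,α} = (|λ|_α/N)^{1/p} x is an isometry from X into ℓ^p_{N·m^N}(X), and the map Q : (X^N)^A → X defined by Q(x_{k,α}) = Σ_{α∈A} (|λ|_α/N)^{1/q} Σ_{k=1}^N x_{k,α} is a contraction from ℓ^p_{N·m^N}(X) to X. -/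
open scoped ENNReal

/-! With weights `w_i = |λ|_α / N` indexed by `i = (α, k)`, which are nonnegative and sum to `1`
(expand `(∑ₖ λₖ)^N = 1`), `J` is `x ↦ (w_i^{1/p} x)_i`, whose `ℓ^p`-norm is
`(∑ w_i ‖x‖^p)^{1/p} = ‖x‖`, and `Q` is `y ↦ ∑ w_i^{1/q} y_i`, a contraction by Hölder's inequality:
`∑ w_i^{1/q} ‖y_i‖ ≤ (∑ w_i)^{1/q} ‖y‖_p`. -/

theorem Fintype.sum_pi_prod_eq_one {ι κ R : Type*} [Fintype ι] [DecidableEq ι] [Fintype κ]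
    [CommSemiring R] {w : κ → R} (hw : ∑ k, w k = 1) : ∑ α : ι → κ, ∏ i, w (α i) = 1 := by
  rw [← Fintype.prod_sum (fun _ : ι => w)]
  simp [hw]

theorem Fintype.sum_prod_fin_div {ι : Type*} [Fintype ι] {N : ℕ} (hN : 0 < N) (f : ι → ℝ) :
    ∑ i : ι × Fin N, f i.1 / N = ∑ a, f a := by
  rw [Fintype.sum_prod_type]
  simp only [Finset.sum_const, Finset.card_univ, Fintype.card_fin, nsmul_eq_mul]
  exact Finset.sum_congr rfl fun a _ => mul_div_cancel₀ _ (Nat.cast_ne_zero.mpr hN.ne')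

section WeightedPiLp

variable {ι 𝕜 X : Type*} [Fintype ι] [RCLike 𝕜] [NormedAddCommGroup X] [NormedSpace 𝕜 X]
  {w : ι → ℝ}

theorem PiLp.norm_toLp_rpow_smul {p : ℝ} (hp : 0 < p) (hw0 : ∀ i, 0 ≤ w i)
    (hw1 : ∑ i, w i = 1) (x : X) :
    ‖(WithLp.equiv (ENNReal.ofReal p) (ι → X)).symm (fun i => ((w i ^ (1 / p) : ℝ) : 𝕜) • x)‖
      = ‖x‖ := by
  have hp' : (ENNReal.ofReal p).toReal = p := ENNReal.toReal_ofReal hp.le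
  rw [PiLp.norm_eq_sum (hp'.symm ▸ hp)]
  simp only [WithLp.equiv_symm_apply, PiLp.toLp_apply, hp', norm_smul, RCLike.norm_ofReal]
  have hterm (i : ι) : (|w i ^ (1 / p)| * ‖x‖) ^ p = w i * ‖x‖ ^ p := by
    rw [abs_of_nonneg (Real.rpow_nonneg (hw0 i) _), Real.mul_rpow (Real.rpow_nonneg (hw0 i) _)
      (norm_nonneg x), ← Real.rpow_mul (hw0 i), one_div_mul_cancel hp.ne', Real.rpow_one]
  rw [Finset.sum_congr rfl fun i _ => hterm i, ← Finset.sum_mul, hw1, one_mul,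
    ← Real.rpow_mul (norm_nonneg x), mul_one_div_cancel hp.ne', Real.rpow_one]

theorem PiLp.norm_sum_rpow_smul_le {p q : ℝ} (hpq : p.HolderConjugate q) (hw0 : ∀ i, 0 ≤ w i)
    (hw1 : ∑ i, w i ≤ 1) (y : PiLp (ENNReal.ofReal p) (fun _ : ι => X)) :
    ‖∑ i, ((w i ^ (1 / q) : ℝ) : 𝕜) • y i‖ ≤ ‖y‖ := by
  have hp' : (ENNReal.ofReal p).toReal = p := ENNReal.toReal_ofReal hpq.nonneg
  have hcoef (i : ι) : (w i ^ (1 / q)) ^ q = w i := by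
    rw [← Real.rpow_mul (hw0 i), one_div_mul_cancel hpq.symm.ne_zero, Real.rpow_one]
  calc ‖∑ i, ((w i ^ (1 / q) : ℝ) : 𝕜) • y i‖
      ≤ ∑ i, w i ^ (1 / q) * ‖y i‖ := by
        refine (norm_sum_le _ _).trans_eq (Finset.sum_congr rfl fun i _ => ?_)
        rw [norm_smul, RCLike.norm_ofReal, abs_of_nonneg (Real.rpow_nonneg (hw0 i) _)]
    _ ≤ (∑ i, (w i ^ (1 / q)) ^ q) ^ (1 / q) * (∑ i, ‖y i‖ ^ p) ^ (1 / p) :=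
        Real.inner_le_Lp_mul_Lq_of_nonneg _ hpq.symm
          (fun i _ => Real.rpow_nonneg (hw0 i) _) (fun i _ => norm_nonneg _)
    _ ≤ 1 * (∑ i, ‖y i‖ ^ p) ^ (1 / p) := by
        simp only [hcoef]
        gcongr
        exact Real.rpow_le_one (Finset.sum_nonneg fun i _ => hw0 i) hw1 (one_div_nonneg.mpr hpq.symm.nonneg)
    _ = ‖y‖ := by
        rw [one_mul, PiLp.norm_eq_sum (hp'.symm ▸ hpq.pos), hp']

end WeightedPiLp

theorem convex_coefficients_J_isometry_Q_contraction_general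
    (p q : ℝ) (hp : 1 < p) (hpq : 1 / p + 1 / q = 1)
    (𝕜 : Type*) [RCLike 𝕜] (X : Type*) [NormedAddCommGroup X] [NormedSpace 𝕜 X]
    (m N : ℕ) (hN : 0 < N)
    (lam : Fin m → ℝ) (hlam : ∀ k, lam k ∈ Set.Icc (0 : ℝ) 1) (hsum : ∑ k, lam k = 1) :
    (∑ α : Fin N → Fin m, ∏ k, lam (α k)) = 1 ∧
    (∀ x : X,
      ‖(WithLp.equiv (ENNReal.ofReal p) (∀ _ : (Fin N → Fin m) × Fin N, X)).symm
          (fun i => ((((∏ k, lam (i.1 k)) / N) ^ (1 / p) : ℝ) : 𝕜) • x)‖ = ‖x‖) ∧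
    (∀ y : PiLp (ENNReal.ofReal p) (fun _ : (Fin N → Fin m) × Fin N => X),
      ‖∑ α : Fin N → Fin m, ((((∏ k, lam (α k)) / N) ^ (1 / q) : ℝ) : 𝕜) •
          ∑ k : Fin N, (WithLp.equiv (ENNReal.ofReal p) _ y) (α, k)‖ ≤ ‖y‖) := by
  have hpq' : p.HolderConjugate q :=
    Real.holderConjugate_iff.mpr ⟨hp, by simpa only [one_div] using hpq⟩
  have hprod : (∑ α : Fin N → Fin m, ∏ k, lam (α k)) = 1 := Fintype.sum_pi_prod_eq_one hsum
  set w : (Fin N → Fin m) × Fin N → ℝ := fun i => (∏ k, lam (i.1 k)) / N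
  have hw0 (i) : 0 ≤ w i :=
    div_nonneg (Finset.prod_nonneg fun k _ => (hlam (i.1 k)).1) (Nat.cast_nonneg N)
  have hw1 : ∑ i, w i = 1 := (Fintype.sum_prod_fin_div hN _).trans hprod
  refine ⟨hprod, PiLp.norm_toLp_rpow_smul hpq'.pos hw0 hw1, fun y => ?_⟩
  simp only [Finset.smul_sum, ← Fintype.sum_prod_type']
  exact PiLp.norm_sum_rpow_smul_le hpq' hw0 hw1.le y

/-- For `p ∈ (1,∞)` with conjugate `q`, convex coefficients
`λ₁, …, λ_m` and `A` the set of maps `{1,…,N} → {1,…,m}` with `|λ|_α = ∏ₖ λ_{α(k)}`: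
`∑_α |λ|_α = 1`, the map `J x = ((|λ|_α/N)^{1/p} x)_{k,α}` is an isometry from `X` into
`ℓ^p_{N·m^N}(X)`, and `Q((x_{k,α})) = ∑_α (|λ|_α/N)^{1/q} ∑ₖ x_{k,α}` is a contraction. -/
theorem convex_coefficients_J_isometry_Q_contraction
    (p q : ℝ) (hp : 1 < p) (hpq : 1 / p + 1 / q = 1)
    (𝕜 : Type*) [RCLike 𝕜] (X : Type*) [NormedAddCommGroup X] [NormedSpace 𝕜 X]
    (m N : ℕ) (hm : 0 < m) (hN : 0 < N)
    (lam : Fin m → ℝ) (hlam : ∀ k, lam k ∈ Set.Icc (0 : ℝ) 1) (hsum : ∑ k, lam k = 1) :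
    (∑ α : Fin N → Fin m, ∏ k, lam (α k)) = 1 ∧
    (∀ x : X,
      ‖(WithLp.equiv (ENNReal.ofReal p) (∀ _ : (Fin N → Fin m) × Fin N, X)).symm
          (fun i => ((((∏ k, lam (i.1 k)) / N) ^ (1 / p) : ℝ) : 𝕜) • x)‖ = ‖x‖) ∧
    (∀ y : PiLp (ENNReal.ofReal p) (fun _ : (Fin N → Fin m) × Fin N => X),
      ‖∑ α : Fin N → Fin m, ((((∏ k, lam (α k)) / N) ^ (1 / q) : ℝ) : 𝕜) •
          ∑ k : Fin N, (WithLp.equiv (ENNReal.ofReal p) _ y) (α, k)‖ ≤ ‖y‖) :=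
  convex_coefficients_J_isometry_Q_contraction_general p q hp hpq 𝕜 X m N hN lam hlam hsum
end

section
/- Fix p ∈ (1,∞), a Banach space Y, and N ∈ ℕ. Let Ỹ = ℓ^p_{N+1}(Y), J̃ : Y → Ỹ, x ↦ (x,0,…,0), Q̃ : Ỹ → Y, (x₁,…,x_{N+1}) ↦ x₁. For an invertible isometry U ∈ L(Y) define V_U(x₁,…,x_{N+1}) = (Ux₁,…,Ux_{N+1}), and define V₀(x₁,…,x_{N+1}) = (x₂,…,x_{N+1},x₁). Then J̃ and Q̃ are contractions, each V_U and V₀ is an invertible isometry on Ỹ, and for all n ∈ {0,…,N} and all choices W₁,…,W_n where each W_j is either some invertible isometry U_j or the zero operator 0 on Y, one has W₁⋯W_n = Q̃ Ṽ_{W₁}⋯Ṽ_{W_n} J̃, where Ṽ_{W_j} = V_{U_j} if W_j = U_j is an isometry and Ṽ_{W_j} = V₀ if W_j = 0. -/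
/-! Each `V_U` acts coordinatewise and `V₀` permutes the coordinates, so they commute: a dilated
word with `k` zeros is the coordinatewise action of the product of its isometries followed by
`V₀ᵏ`. Applied to `J̃ x` and read off at the first coordinate, this is that product applied to
`x` when `k = 0`, and `0` otherwise, since `0 < k ≤ N` moves `x` off the first of the `N + 1`
coordinates. -/

open scoped ENNReal

section Stmt10

variable (p : ℝ) {𝕜 : Type*} [RCLike 𝕜] {Y : Type*} [NormedAddCommGroup Y]
  [NormedSpace 𝕜 Y] (N : ℕ)

/-- The injection `J̃ : Y → ℓ^p_{N+1}(Y)`, `x ↦ (x, 0, …, 0)`. -/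
noncomputable def dilJ (x : Y) : PiLp (ENNReal.ofReal p) (fun _ : Fin (N + 1) => Y) :=
  (WithLp.equiv (ENNReal.ofReal p) (∀ _ : Fin (N + 1), Y)).symm
    (fun i => if i = 0 then x else 0)

/-- The projection `Q̃ : ℓ^p_{N+1}(Y) → Y`, `(x₁, …, x_{N+1}) ↦ x₁`. -/
noncomputable def dilQ (y : PiLp (ENNReal.ofReal p) (fun _ : Fin (N + 1) => Y)) : Y :=
  (WithLp.equiv (ENNReal.ofReal p) (∀ _ : Fin (N + 1), Y)) y 0

/-- `V_U : (x₁, …, x_{N+1}) ↦ (U x₁, …, U x_{N+1})` for an invertible isometry `U`. -/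
noncomputable def dilVU (U : Y ≃ₗᵢ[𝕜] Y)
    (y : PiLp (ENNReal.ofReal p) (fun _ : Fin (N + 1) => Y)) :
    PiLp (ENNReal.ofReal p) (fun _ : Fin (N + 1) => Y) :=
  (WithLp.equiv (ENNReal.ofReal p) (∀ _ : Fin (N + 1), Y)).symm
    (fun i => U ((WithLp.equiv (ENNReal.ofReal p) (∀ _ : Fin (N + 1), Y)) y i))

/-- `V₀ : (x₁, …, x_{N+1}) ↦ (x₂, …, x_{N+1}, x₁)`, the cyclic shift. -/
noncomputable def dilV0 (y : PiLp (ENNReal.ofReal p) (fun _ : Fin (N + 1) => Y)) :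
    PiLp (ENNReal.ofReal p) (fun _ : Fin (N + 1) => Y) :=
  (WithLp.equiv (ENNReal.ofReal p) (∀ _ : Fin (N + 1), Y)).symm
    (fun i => (WithLp.equiv (ENNReal.ofReal p) (∀ _ : Fin (N + 1), Y)) y (finRotate (N + 1) i))

theorem finRotate_succ_iterate_zero_eq_zero_iff {n k : ℕ} (hk : k ≤ n) :
    (finRotate (n + 1))^[k] 0 = 0 ↔ k = 0 := by
  have hcycle := finCycle_eq_finRotate_iterate (k := ⟨k, Nat.lt_succ_of_le hk⟩)
  rw [← hcycle, finCycle_apply, zero_add, Fin.ext_iff, Fin.val_zero]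

theorem dilJ_eq_single (x : Y) : dilJ p N x = PiLp.single (ENNReal.ofReal p) 0 x := by
  ext i
  by_cases hi : i = 0 <;> simp [dilJ, hi]

theorem dilVU_eq_piLpCongrRight [Fact (1 ≤ ENNReal.ofReal p)] (U : Y ≃ₗᵢ[𝕜] Y) :
    dilVU p N U = LinearIsometryEquiv.piLpCongrRight (ENNReal.ofReal p) fun _ => U :=
  rfl

theorem dilV0_eq_piLpCongrLeft [Fact (1 ≤ ENNReal.ofReal p)] :
    dilV0 (Y := Y) p N = LinearIsometryEquiv.piLpCongrLeft (ENNReal.ofReal p) 𝕜 Y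
      (finRotate (N + 1)).symm :=
  rfl

/-- The word `W₁⋯W_n`, where `none` stands for the zero operator. -/
def opWord (L : List (Option (Y ≃ₗᵢ[𝕜] Y))) : Y → Y :=
  (L.map fun o => o.elim (fun _ => 0) (⇑)).foldr (· ∘ ·) id

noncomputable def dilWord (L : List (Option (Y ≃ₗᵢ[𝕜] Y))) :
    PiLp (ENNReal.ofReal p) (fun _ : Fin (N + 1) => Y) →
      PiLp (ENNReal.ofReal p) (fun _ : Fin (N + 1) => Y) :=
  (L.map fun o => o.elim (dilV0 p N) (dilVU p N)).foldr (· ∘ ·) id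

theorem opWord_apply (L : List (Option (Y ≃ₗᵢ[𝕜] Y))) (x : Y) :
    opWord L x = if L.countP (·.isNone) = 0 then L.reduceOption.prod x else 0 := by
  induction L with
  | nil => rfl
  | cons o L ih =>
    cases o with
    | none => simp [opWord]
    | some U =>
      change U (opWord L x) = _
      simp [ih, apply_ite U]

theorem dilWord_apply (L : List (Option (Y ≃ₗᵢ[𝕜] Y)))
    (y : PiLp (ENNReal.ofReal p) (fun _ : Fin (N + 1) => Y)) (i : Fin (N + 1)) :
    dilWord p N L y i =
      L.reduceOption.prod (y ((finRotate (N + 1))^[L.countP (·.isNone)] i)) := by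
  induction L generalizing i with
  | nil => rfl
  | cons o L ih =>
    cases o with
    | none =>
      change dilWord p N L y (finRotate (N + 1) i) = _
      simp [ih, Function.iterate_succ_apply]
    | some U =>
      change U (dilWord p N L y i) = _
      simp [ih]

theorem dilQ_dilWord_dilJ (L : List (Option (Y ≃ₗᵢ[𝕜] Y))) (hL : L.countP (·.isNone) ≤ N)
    (x : Y) : dilQ p N (dilWord p N L (dilJ p N x)) = opWord L x := by
  change dilWord p N L (dilJ p N x) 0 = _
  rw [dilWord_apply, opWord_apply]
  change L.reduceOption.prod (if _ = 0 then x else 0) = _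
  simp only [finRotate_succ_iterate_zero_eq_zero_iff hL]
  split_ifs
  · rfl
  · exact map_zero _

/-- `J̃` and `Q̃` are contractions, every `V_U` and `V₀` is an invertible
isometry on `ℓ^p_{N+1}(Y)`, and every word `W₁⋯W_n` (`n ≤ N`) in invertible isometries
and the zero operator on `Y` satisfies `W₁⋯W_n = Q̃ Ṽ_{W₁}⋯Ṽ_{W_n} J̃`, where
`Ṽ_{W} = V_U` if `W = U` is an isometry and `Ṽ_{W} = V₀` if `W = 0`. -/
theorem zero_operator_N_dilation (hp : 1 < p) :
    (∀ x : Y, ‖dilJ p N x‖ ≤ ‖x‖) ∧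
    (∀ y : PiLp (ENNReal.ofReal p) (fun _ : Fin (N + 1) => Y), ‖dilQ p N y‖ ≤ ‖y‖) ∧
    (∀ U : Y ≃ₗᵢ[𝕜] Y, Function.Bijective (dilVU (𝕜 := 𝕜) p N U) ∧
      ∀ y, ‖dilVU (𝕜 := 𝕜) p N U y‖ = ‖y‖) ∧
    (Function.Bijective (dilV0 (Y := Y) p N) ∧ ∀ y, ‖dilV0 (Y := Y) p N y‖ = ‖y‖) ∧
    (∀ (n : ℕ), n ≤ N → ∀ (w : Fin n → Option (Y ≃ₗᵢ[𝕜] Y)) (x : Y),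
      ((List.ofFn fun j => (w j).elim (fun _ => (0 : Y)) (fun U => ⇑U)).foldr (· ∘ ·) id) x
        = dilQ p N (((List.ofFn fun j =>
            (w j).elim (dilV0 p N) (dilVU p N)).foldr (· ∘ ·) id) (dilJ p N x))) := by
  have : Fact (1 ≤ ENNReal.ofReal p) := ⟨ENNReal.one_le_ofReal.mpr hp.le⟩
  refine ⟨fun x => by rw [dilJ_eq_single, PiLp.norm_single], fun y => PiLp.norm_apply_le y 0,
    fun U => ?_, ?_, fun n hn w x => ?_⟩
  · rw [dilVU_eq_piLpCongrRight]
    exact ⟨LinearIsometryEquiv.bijective _, LinearIsometryEquiv.norm_map _⟩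
  · rw [dilV0_eq_piLpCongrLeft (𝕜 := 𝕜)]
    exact ⟨LinearIsometryEquiv.bijective _, LinearIsometryEquiv.norm_map _⟩
  · have hcount : (List.ofFn w).countP (·.isNone) ≤ N :=
      List.countP_le_length.trans (by simpa using hn)
    simpa only [opWord, dilWord, List.map_ofFn, Function.comp_def] using
      (dilQ_dilWord_dilJ p N (List.ofFn w) hcount x).symm

end Stmt10
end

section
/- Fix p ∈ (1,∞) with p ≠ 2 and n ∈ ℕ. Every positive linear isometry of ℓ^p_n onto itself is a permutation operator, i.e., there is a permutation π of {1,…,n} such that T(e_k) = e_{π(k)} for all standard basis vectors e_k. -/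
/-!
For `p > 1` and nonnegative reals, `a ^ p + b ^ p ≤ (a + b) ^ p` with equality only if `a b = 0`.
Hence, for nonnegative `x y ∈ ℓ^p_n`, `‖x + y‖^p = ‖x‖^p + ‖y‖^p` exactly when `x` and `y` have
disjoint supports. A positive isometry preserves both sides, so it sends the basis vectors to
nonnegative unit vectors with pairwise disjoint, nonempty supports; `n` such supports in `n`
coordinates must be distinct singletons, and a nonnegative unit vector supported at one point is a
basis vector.
-/

open scoped ENNReal

open Function

namespace Real

lemma rpow_add_rpow_lt_add_rpow {p a b : ℝ} (hp : 1 < p) (ha : 0 < a) (hb : 0 < b) :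
    a ^ p + b ^ p < (a + b) ^ p := by
  have hab : 0 < a + b := ha.trans (lt_add_of_pos_right a hb)
  have hp1 : 0 < p - 1 := sub_pos.mpr hp
  have split : ∀ c : ℝ, 0 < c → c ^ p = c * c ^ (p - 1) := fun c hc => by
    rw [← Real.rpow_one_add' hc.le (by linarith), add_sub_cancel]
  calc a ^ p + b ^ p = a * a ^ (p - 1) + b * b ^ (p - 1) := by rw [split a ha, split b hb]
    _ < a * (a + b) ^ (p - 1) + b * (a + b) ^ (p - 1) := by
      gcongr
      · exact lt_add_of_pos_right a hb
      · exact lt_add_of_pos_left b ha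
    _ = (a + b) ^ p := by rw [split _ hab]; ring

lemma eq_zero_or_eq_zero_of_rpow_add_rpow_eq {p a b : ℝ} (hp : 1 < p) (ha : 0 ≤ a) (hb : 0 ≤ b)
    (h : a ^ p + b ^ p = (a + b) ^ p) : a = 0 ∨ b = 0 := by
  by_contra! hab
  exact (rpow_add_rpow_lt_add_rpow hp (ha.lt_of_ne' hab.1) (hb.lt_of_ne' hab.2)).ne h

end Real

namespace PiLp

variable {p : ℝ≥0∞} {ι : Type*} [Fintype ι]

lemma norm_rpow_eq_sum {β : ι → Type*} [∀ i, SeminormedAddCommGroup (β i)]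
    (hp : 0 < p.toReal) (x : PiLp p β) : ‖x‖ ^ p.toReal = ∑ i, ‖x i‖ ^ p.toReal := by
  rw [norm_eq_sum hp, ← Real.rpow_mul (by positivity), one_div, inv_mul_cancel₀ hp.ne',
    Real.rpow_one]

lemma norm_add_rpow_eq_iff {x y : PiLp p (fun _ : ι => ℝ)} (hp : 1 < p.toReal)
    (hx : ∀ i, 0 ≤ x i) (hy : ∀ i, 0 ≤ y i) :
    ‖x + y‖ ^ p.toReal = ‖x‖ ^ p.toReal + ‖y‖ ^ p.toReal ↔ ∀ i, x i = 0 ∨ y i = 0 := by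
  have hp0 : 0 < p.toReal := one_pos.trans hp
  simp only [norm_rpow_eq_sum hp0, ← Finset.sum_add_distrib, add_apply, Real.norm_eq_abs,
    abs_of_nonneg (hx _), abs_of_nonneg (hy _), abs_of_nonneg (add_nonneg (hx _) (hy _))]
  have hle : ∀ i ∈ Finset.univ, x i ^ p.toReal + y i ^ p.toReal ≤ (x i + y i) ^ p.toReal :=
    fun i _ => Real.add_rpow_le_rpow_add (hx i) (hy i) hp.le
  rw [eq_comm, Finset.sum_eq_sum_iff_of_le hle]
  refine forall_congr' fun i => ⟨fun h => ?_, fun h _ => ?_⟩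
  · exact Real.eq_zero_or_eq_zero_of_rpow_add_rpow_eq hp (hx i) (hy i) (h (Finset.mem_univ i))
  · rcases h with h | h <;> simp [h, Real.zero_rpow hp0.ne']

lemma apply_eq_zero_or_apply_eq_zero_of_norm_map {κ : Type*} [Fintype κ] (hp : 1 < p.toReal)
    (T : PiLp p (fun _ : ι => ℝ) →ₗ[ℝ] PiLp p (fun _ : κ => ℝ)) (hiso : ∀ x, ‖T x‖ = ‖x‖)
    (hpos : ∀ x, (∀ i, 0 ≤ x i) → ∀ i, 0 ≤ T x i) {x y : PiLp p (fun _ : ι => ℝ)}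
    (hx : ∀ i, 0 ≤ x i) (hy : ∀ i, 0 ≤ y i) (hxy : ∀ i, x i = 0 ∨ y i = 0) :
    ∀ i, T x i = 0 ∨ T y i = 0 := by
  have hnorm := (norm_add_rpow_eq_iff hp hx hy).mpr hxy
  rwa [← hiso, ← hiso x, ← hiso y, map_add,
    norm_add_rpow_eq_iff hp (hpos x hx) (hpos y hy)] at hnorm

lemma eq_single_of_norm_eq_one [Fact (1 ≤ p)] [DecidableEq ι] {x : PiLp p (fun _ : ι => ℝ)} {i : ι}
    (hx : ∀ j, 0 ≤ x j) (hsupp : ∀ j, j ≠ i → x j = 0) (hnorm : ‖x‖ = 1) :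
    x = single p i 1 := by
  have hxi : x = single p i (x i) := by
    ext j
    rcases eq_or_ne j i with rfl | hj
    · simp
    · simp [hsupp j hj, hj]
  rw [hxi, norm_single, Real.norm_eq_abs, abs_of_nonneg (hx i)] at hnorm
  rwa [hnorm] at hxi

end PiLp

/-- Choosing a point in each set gives an injection `ι → ι`, hence a bijection; disjointness then
leaves no room for a second point. -/
lemma Set.exists_perm_eq_singleton_of_pairwise_disjoint {ι : Type*} [Finite ι] {s : ι → Set ι}
    (hne : ∀ k, (s k).Nonempty) (hdisj : Pairwise (Disjoint on s)) :
    ∃ π : Equiv.Perm ι, ∀ k, s k = {π k} := by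
  choose σ hσ using hne
  have mem_iff : ∀ j k, σ j ∈ s k ↔ j = k := fun j k =>
    ⟨fun h => by_contra fun hjk => Set.disjoint_left.mp (hdisj hjk) (hσ j) h, fun h => h ▸ hσ j⟩
  have hinj : σ.Injective := fun j k h => (mem_iff j k).mp (h ▸ hσ k)
  have hbij : σ.Bijective := Finite.injective_iff_bijective.mp hinj
  refine ⟨Equiv.ofBijective σ hbij, fun k => Set.eq_singleton_iff_unique_mem.mpr ⟨hσ k, ?_⟩⟩
  intro i hi
  obtain ⟨j, rfl⟩ := hbij.2 i
  simp [(mem_iff j k).mp hi]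

theorem positive_isometry_lp_is_permutation_general
    (p : ℝ) (hp : 1 < p) (n : ℕ)
    (T : PiLp (ENNReal.ofReal p) (fun _ : Fin n => ℝ) →ₗ[ℝ]
      PiLp (ENNReal.ofReal p) (fun _ : Fin n => ℝ))
    (hiso : ∀ x, ‖T x‖ = ‖x‖)
    (hpos : ∀ x, (∀ i, 0 ≤ (WithLp.equiv (ENNReal.ofReal p) (∀ _ : Fin n, ℝ)) x i) →
      ∀ i, 0 ≤ (WithLp.equiv (ENNReal.ofReal p) (∀ _ : Fin n, ℝ)) (T x) i) :
    ∃ π : Equiv.Perm (Fin n), ∀ k : Fin n,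
      T ((WithLp.equiv (ENNReal.ofReal p) (∀ _ : Fin n, ℝ)).symm (Pi.single k 1))
        = (WithLp.equiv (ENNReal.ofReal p) (∀ _ : Fin n, ℝ)).symm (Pi.single (π k) 1) := by
  classical
  have hp' : 1 < (ENNReal.ofReal p).toReal := by rwa [ENNReal.toReal_ofReal (by linarith)]
  have : Fact (1 ≤ ENNReal.ofReal p) := ⟨by simpa using hp.le⟩
  set e : Fin n → PiLp (ENNReal.ofReal p) (fun _ : Fin n => ℝ) :=
    fun k => PiLp.single (ENNReal.ofReal p) k 1
  have he_nonneg : ∀ k i, 0 ≤ e k i := fun k i => by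
    simp only [e, PiLp.single_apply]; split_ifs <;> norm_num
  have hTe_nonneg : ∀ k i, 0 ≤ T (e k) i := fun k => hpos _ (he_nonneg k)
  have hTe_norm : ∀ k, ‖T (e k)‖ = 1 := fun k => by simp [e, hiso]
  have hTe_ne : ∀ k, {i | T (e k) i ≠ 0}.Nonempty := fun k => by
    have hne : T (e k) ≠ 0 := by rw [← norm_ne_zero_iff, hTe_norm k]; exact one_ne_zero
    by_contra! h
    exact hne (PiLp.ext fun i => by_contra fun hi => h.subset hi)
  have hTe_disj : Pairwise (Disjoint on fun k => {i | T (e k) i ≠ 0}) := fun j k hjk => by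
    have he_disj : ∀ i, e j i = 0 ∨ e k i = 0 := fun i => by
      rcases eq_or_ne i j with rfl | hij
      · simp [e, hjk]
      · simp [e, hij]
    have hsupp := PiLp.apply_eq_zero_or_apply_eq_zero_of_norm_map hp' T hiso hpos
      (he_nonneg j) (he_nonneg k) he_disj
    exact Set.disjoint_left.mpr fun i hj hk => (hsupp i).elim hj hk
  obtain ⟨π, hπ⟩ := Set.exists_perm_eq_singleton_of_pairwise_disjoint hTe_ne hTe_disj
  refine ⟨π, fun k => PiLp.eq_single_of_norm_eq_one (hTe_nonneg k) (fun i hi => ?_) (hTe_norm k)⟩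
  exact not_not.mp fun h => hi ((Set.ext_iff.mp (hπ k) i).mp h)

/-- For `p ∈ (1,∞)`, `p ≠ 2`, every positive linear isometry of
`ℓ^p_n` onto itself is a permutation operator: there is a permutation `π` of `{1,…,n}`
with `T eₖ = e_{π(k)}` for all standard basis vectors. -/
theorem positive_isometry_lp_is_permutation
    (p : ℝ) (hp : 1 < p) (hp2 : p ≠ 2) (n : ℕ)
    (T : PiLp (ENNReal.ofReal p) (fun _ : Fin n => ℝ) →ₗ[ℝ]
      PiLp (ENNReal.ofReal p) (fun _ : Fin n => ℝ))
    (hsurj : Function.Surjective T)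
    (hiso : ∀ x, ‖T x‖ = ‖x‖)
    (hpos : ∀ x, (∀ i, 0 ≤ (WithLp.equiv (ENNReal.ofReal p) (∀ _ : Fin n, ℝ)) x i) →
      ∀ i, 0 ≤ (WithLp.equiv (ENNReal.ofReal p) (∀ _ : Fin n, ℝ)) (T x) i) :
    ∃ π : Equiv.Perm (Fin n), ∀ k : Fin n,
      T ((WithLp.equiv (ENNReal.ofReal p) (∀ _ : Fin n, ℝ)).symm (Pi.single k 1))
        = (WithLp.equiv (ENNReal.ofReal p) (∀ _ : Fin n, ℝ)).symm (Pi.single (π k) 1) :=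
  positive_isometry_lp_is_permutation_general p hp n T hiso hpos
end

section
/- Let X be a Banach lattice and T ∈ L(X) a positive invertible isometry (i.e., a bijective linear isometry with T ≥ 0). Then T is a lattice isomorphism: T(x ∨ y) = Tx ∨ Ty for all x, y ∈ X, and T⁻¹ is also positive. -/
/-!
Let `T x ≥ 0` and put `b = T x⁺`, `a = T x⁻ ≥ 0`. Since `x⁺` and `n • x⁻` are disjoint,
`‖x⁺ + n • x⁻‖ = ‖x⁺ - n • x⁻‖`, so the isometry gives `‖b + n • a‖ = ‖b - n • a‖`. As
`b - a = T x ≥ 0`, solidity of the norm yields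
`‖b + (n + 2) • a‖ = ‖(b - a) - (n + 1) • a‖ ≤ ‖(b - a) + (n + 1) • a‖ = ‖b + n • a‖`,
so the multiples of `a` stay bounded by `‖b‖` and `a = 0`, i.e. `x⁻ = 0`. Hence `T` reflects the
order, and a bijective order embedding is an order isomorphism, which preserves `⊔`.
-/

section LatticeGroup

variable {α : Type*} [Lattice α] [AddCommGroup α] [IsOrderedAddMonoid α] {a b c : α}

lemma inf_add_eq_zero (hab : a ⊓ b = 0) (hac : a ⊓ c = 0) : a ⊓ (b + c) = 0 := by
  have hb : 0 ≤ b := hab ▸ inf_le_right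
  have hc : 0 ≤ c := hac ▸ inf_le_right
  refine le_antisymm ?_ (le_inf (hab ▸ inf_le_left) (add_nonneg hb hc))
  have h : a ⊓ (b + c) ≤ a ⊓ b + c := by
    rw [inf_add]
    exact le_inf (inf_le_left.trans (le_add_of_nonneg_right hc)) inf_le_right
  rw [hab, zero_add] at h
  exact hac ▸ le_inf inf_le_left h

lemma inf_nsmul_eq_zero (h : a ⊓ b = 0) (n : ℕ) : a ⊓ n • b = 0 := by
  induction n with
  | zero => simpa using (h ▸ inf_le_left : (0 : α) ≤ a)
  | succ n ih => rw [succ_nsmul]; exact inf_add_eq_zero ih h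

lemma abs_sub_eq_add_of_inf_eq_zero (h : a ⊓ b = 0) : |a - b| = a + b := by
  rw [← sup_sub_inf_eq_abs_sub b a, inf_comm, h, sub_zero, sup_comm, ← inf_add_sup a b, h,
    zero_add]

lemma abs_sub_le_add_of_nonneg (ha : 0 ≤ a) (hb : 0 ≤ b) : |a - b| ≤ a + b := by
  simpa [sub_eq_add_neg, abs_of_nonneg ha, abs_of_nonneg hb] using abs_add_le a (-b)

end LatticeGroup

lemma eq_zero_of_forall_norm_nsmul_le {E : Type*} [NormedAddCommGroup E] [NormedSpace ℝ E] {a : E}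
    {C : ℝ} (h : ∀ n : ℕ, ‖n • a‖ ≤ C) : a = 0 := by
  by_contra ha
  obtain ⟨n, hn⟩ := exists_nat_gt (C / ‖a‖)
  have hC := h n
  rw [RCLike.norm_nsmul ℝ, nsmul_eq_mul] at hC
  rw [div_lt_iff₀ (norm_pos_iff.2 ha)] at hn
  linarith

section SolidNorm

variable {α : Type*} [NormedAddCommGroup α] [Lattice α] [IsOrderedAddMonoid α] [HasSolidNorm α]
  {a b : α}

lemma norm_le_norm_of_nonneg_of_le (ha : 0 ≤ a) (hab : a ≤ b) : ‖a‖ ≤ ‖b‖ :=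
  norm_le_norm_of_abs_le_abs (by rwa [abs_of_nonneg ha, abs_of_nonneg (ha.trans hab)])

lemma norm_sub_eq_norm_add_of_inf_eq_zero (h : a ⊓ b = 0) : ‖a - b‖ = ‖a + b‖ := by
  rw [← norm_abs_eq_norm, abs_sub_eq_add_of_inf_eq_zero h]

lemma norm_sub_le_norm_add_of_nonneg (ha : 0 ≤ a) (hb : 0 ≤ b) : ‖a - b‖ ≤ ‖a + b‖ :=
  norm_le_norm_of_abs_le_abs <|
    (abs_sub_le_add_of_nonneg ha hb).trans_eq (abs_of_nonneg (add_nonneg ha hb)).symm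

lemma norm_posPart_add_nsmul_negPart (x : α) (n : ℕ) : ‖x⁺ + n • x⁻‖ = ‖x⁺ - n • x⁻‖ :=
  (norm_sub_eq_norm_add_of_inf_eq_zero (inf_nsmul_eq_zero (posPart_inf_negPart_eq_zero x) n)).symm

lemma eq_zero_of_norm_add_nsmul_eq_norm_sub_nsmul [NormedSpace ℝ α] (ha : 0 ≤ a) (hab : a ≤ b)
    (h : ∀ n : ℕ, ‖b + n • a‖ = ‖b - n • a‖) : a = 0 := by
  have step (n : ℕ) : ‖b + (n + 2) • a‖ ≤ ‖b + n • a‖ := calc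
    ‖b + (n + 2) • a‖ = ‖(b - a) - (n + 1) • a‖ := by rw [h, succ_nsmul]; abel_nf
    _ ≤ ‖(b - a) + (n + 1) • a‖ :=
      norm_sub_le_norm_add_of_nonneg (sub_nonneg.2 hab) (nsmul_nonneg ha _)
    _ = ‖b + n • a‖ := by rw [succ_nsmul]; abel_nf
  have bound (n : ℕ) : ‖b + (2 * n) • a‖ ≤ ‖b‖ := by
    induction n with
    | zero => simp
    | succ n ih => exact (step (2 * n)).trans ih
  refine eq_zero_of_forall_norm_nsmul_le fun n =>
    (norm_le_norm_of_nonneg_of_le (nsmul_nonneg ha n) ?_).trans (bound n)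
  exact (nsmul_le_nsmul_left ha (by omega)).trans (le_add_of_nonneg_left (ha.trans hab))

end SolidNorm

section Isometry

variable {X Y F : Type*} [NormedAddCommGroup X] [Lattice X] [IsOrderedAddMonoid X] [HasSolidNorm X]
  [NormedAddCommGroup Y] [Lattice Y] [IsOrderedAddMonoid Y] [HasSolidNorm Y] [NormedSpace ℝ Y]
  [FunLike F X Y] [AddMonoidHomClass F X Y] {T : F}

lemma nonneg_of_map_nonneg (hnorm : ∀ x, ‖T x‖ = ‖x‖) (hpos : ∀ x, 0 ≤ x → 0 ≤ T x) {x : X}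
    (hx : 0 ≤ T x) : 0 ≤ x := by
  have hT : T x⁻ = 0 := by
    refine eq_zero_of_norm_add_nsmul_eq_norm_sub_nsmul (b := T x⁺) (hpos _ (negPart_nonneg x)) ?_
      fun n => ?_
    · rwa [← sub_nonneg, ← map_sub, posPart_sub_negPart]
    · rw [← map_nsmul, ← map_add, ← map_sub, hnorm, hnorm, norm_posPart_add_nsmul_negPart]
  rw [← negPart_eq_zero, ← norm_eq_zero, ← hnorm, hT, norm_zero]

lemma map_le_map_iff_of_norm_map (hnorm : ∀ x, ‖T x‖ = ‖x‖) (hpos : ∀ x, 0 ≤ x → 0 ≤ T x)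
    {x y : X} : T x ≤ T y ↔ x ≤ y := by
  rw [← sub_nonneg, ← map_sub, ← sub_nonneg (b := x)]
  exact ⟨nonneg_of_map_nonneg hnorm hpos, hpos _⟩

end Isometry

theorem positive_invertible_isometry_is_lattice_iso_general
    (X : Type*) [NormedAddCommGroup X] [Lattice X] [HasSolidNorm X] [IsOrderedAddMonoid X] [NormedSpace ℝ X]
    (T : X →ₗ[ℝ] X) (hbij : Function.Bijective T)
    (hiso : ∀ x, ‖T x‖ = ‖x‖) (hpos : ∀ x, 0 ≤ x → 0 ≤ T x) :
    (∀ x y : X, T (x ⊔ y) = T x ⊔ T y) ∧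
    (∀ y : X, 0 ≤ y → 0 ≤ (LinearEquiv.ofBijective T hbij).symm y) := by
  let E := LinearEquiv.ofBijective T hbij
  let e : X ≃o X := ⟨E.toEquiv, map_le_map_iff_of_norm_map hiso hpos⟩
  refine ⟨e.map_sup, fun y hy => ?_⟩
  exact nonneg_of_map_nonneg hiso hpos (by rwa [← E.apply_symm_apply y] at hy)

/-- Abramovich. On a Banach lattice, a positive invertible (bijective)
linear isometry `T` is a lattice isomorphism: `T (x ⊔ y) = T x ⊔ T y` for all `x, y`,
and its inverse is also positive. -/
theorem positive_invertible_isometry_is_lattice_iso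
    (X : Type*) [NormedAddCommGroup X] [Lattice X] [HasSolidNorm X] [IsOrderedAddMonoid X] [NormedSpace ℝ X] [CompleteSpace X]
    (T : X →ₗ[ℝ] X) (hbij : Function.Bijective T)
    (hiso : ∀ x, ‖T x‖ = ‖x‖) (hpos : ∀ x, 0 ≤ x → 0 ≤ T x) :
    (∀ x y : X, T (x ⊔ y) = T x ⊔ T y) ∧
    (∀ y : X, 0 ≤ y → 0 ≤ (LinearEquiv.ofBijective T hbij).symm y) :=
  positive_invertible_isometry_is_lattice_iso_general X T hbij hiso hpos
end
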